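/- arXiv:1702.07629 — 3 statements merged into one kernel-verified Lean document; each statement's English description precedes it below -/
import Mathlib

section
/- Let A be a unital complex Banach algebra, M a unital A-bimodule, n ≥ 2, and let Δ be a 2-local derivation from M_n(A) into M_n(M) that vanishes on the linear span of the matrix units {e_{ij}}_{i,j=1}^n. If x = Σ_{i=1}^n x_{ii} is a diagonal matrix in M_n(A) (where x_{ii} = e_{ii} x e_{ii}), then e_{kk} Δ(x) e_{kk} = Δ(x_{kk}) for every k with 1 ≤ k ≤ n. -/
open MulOpposite Matrix

variable (A M : Type*) [NormedRing A] [NormedAlgebra ℂ A] [CompleteSpace A]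
  [AddCommGroup M] [Module ℂ M] [Module A M] [Module Aᵐᵒᵖ M]
  [SMulCommClass A Aᵐᵒᵖ M] [IsScalarTower ℂ A M] [IsScalarTower ℂ Aᵐᵒᵖ M]

/-- `D : A → M` is a derivation from the Banach algebra `A` into the unital
`A`-bimodule `M`: a `ℂ`-linear map with the Leibniz rule (the right action of
`A` on `M` is written via `Aᵐᵒᵖ`). -/
def IsDerivation (D : A → M) : Prop :=
  IsLinearMap ℂ D ∧ ∀ x y : A, D (x * y) = op y • D x + x • D y

variable {n : ℕ}

/-- The left action of `Mₙ(A)` on `Mₙ(M)`: `(x · Y)_{ij} = Σ_k x_{ik} · Y_{kj}`. -/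
def matL (x : Matrix (Fin n) (Fin n) A) (Y : Matrix (Fin n) (Fin n) M) :
    Matrix (Fin n) (Fin n) M :=
  Matrix.of fun i j => ∑ k, x i k • Y k j

/-- The right action of `Mₙ(A)` on `Mₙ(M)`: `(Y · x)_{ij} = Σ_k Y_{ik} · x_{kj}`. -/
def matR (Y : Matrix (Fin n) (Fin n) M) (x : Matrix (Fin n) (Fin n) A) :
    Matrix (Fin n) (Fin n) M :=
  Matrix.of fun i j => ∑ k, op (x k j) • Y i k

/-- A derivation from `Mₙ(A)` into the `Mₙ(A)`-bimodule `Mₙ(M)`. -/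
def IsMatDerivation (D : Matrix (Fin n) (Fin n) A → Matrix (Fin n) (Fin n) M) : Prop :=
  IsLinearMap ℂ D ∧
    ∀ x y : Matrix (Fin n) (Fin n) A, D (x * y) = matR A M (D x) y + matL A M x (D y)

/-- A 2-local derivation from `Mₙ(A)` into `Mₙ(M)`: for each pair of points there
is a derivation agreeing with `Δ` at both of them. -/
def Is2LocalMatDerivation (Δ : Matrix (Fin n) (Fin n) A → Matrix (Fin n) (Fin n) M) : Prop :=
  ∀ x y : Matrix (Fin n) (Fin n) A,
    ∃ D : Matrix (Fin n) (Fin n) A → Matrix (Fin n) (Fin n) M,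
      IsMatDerivation A M D ∧ Δ x = D x ∧ Δ y = D y

/-- The matrix unit `e_{ij}`: the unit of `A` at position `(i,j)`, zeros elsewhere. -/
def matUnit (i j : Fin n) : Matrix (Fin n) (Fin n) A :=
  Matrix.single i j 1

/-- The linear span of the matrix units `{e_{ij}}`. -/
noncomputable def unitSpan (n : ℕ) : Submodule ℂ (Matrix (Fin n) (Fin n) A) :=
  Submodule.span ℂ (Set.range fun p : Fin n × Fin n => Matrix.single p.1 p.2 (1 : A))

/-- The set `Dₙ(A)` of diagonal matrices in `Mₙ(A)`. -/
def diagSet (n : ℕ) : Set (Matrix (Fin n) (Fin n) A) :=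
  {x | ∀ i j : Fin n, i ≠ j → x i j = 0}

/-!
The corner `e Δ(x) e` at an idempotent `e` commuting with `x` is computed with two derivations.
A derivation `D` agreeing with `Δ` at `x` and at `e x` has `e D(x) e = e D(e x) e`, because
`e D(e) e = 0` for every idempotent. A derivation `D'` agreeing with `Δ` at `e x` and at `e` kills
`e` (as `Δ` does), and `e x = e (e x) = (e x) e`, so the Leibniz rule makes `D'(e x)` equal to its
own corner. Matrix units `e_{kk}` are idempotents commuting with every diagonal matrix and lie in
the span on which `Δ` vanishes.
-/

theorem Matrix.IsDiag.commute_single_same {ι α : Type*} [Fintype ι] [DecidableEq ι] [Semiring α]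
    {x : Matrix ι ι α} (hx : x.IsDiag) (k : ι) : Commute (single k k 1) x := by
  ext i j
  rcases eq_or_ne i k with hi | hi <;> rcases eq_or_ne j k with hj | hj
  · simp [hi, hj]
  · simp [hi, hj, hx hj.symm]
  · simp [hi, hj, hx hi]
  · simp [hi, hj]

section Bimodule

variable {R N : Type*} [NormedRing R] [AddCommGroup N]

lemma matL_add [Module R N] (x : Matrix (Fin n) (Fin n) R) (Y Z : Matrix (Fin n) (Fin n) N) :
    matL R N x (Y + Z) = matL R N x Y + matL R N x Z := by
  ext i j
  simp [matL, smul_add, Finset.sum_add_distrib]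

lemma matR_add [Module Rᵐᵒᵖ N] (Y Z : Matrix (Fin n) (Fin n) N) (x : Matrix (Fin n) (Fin n) R) :
    matR R N (Y + Z) x = matR R N Y x + matR R N Z x := by
  ext i j
  simp [matR, smul_add, Finset.sum_add_distrib]

lemma matL_zero [Module R N] (x : Matrix (Fin n) (Fin n) R) :
    matL R N x (0 : Matrix (Fin n) (Fin n) N) = 0 := by
  ext i j
  simp [matL]

lemma matR_zero [Module Rᵐᵒᵖ N] (x : Matrix (Fin n) (Fin n) R) :
    matR R N (0 : Matrix (Fin n) (Fin n) N) x = 0 := by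
  ext i j
  simp [matR]

lemma matL_matL [Module R N] (x y : Matrix (Fin n) (Fin n) R) (Y : Matrix (Fin n) (Fin n) N) :
    matL R N x (matL R N y Y) = matL R N (x * y) Y := by
  ext i j
  simp only [matL, Matrix.of_apply, Matrix.mul_apply, Finset.smul_sum, Finset.sum_smul, mul_smul]
  rw [Finset.sum_comm]

lemma matR_matR [Module Rᵐᵒᵖ N] (Y : Matrix (Fin n) (Fin n) N) (x y : Matrix (Fin n) (Fin n) R) :
    matR R N (matR R N Y x) y = matR R N Y (x * y) := by
  ext i j
  simp only [matR, Matrix.of_apply, Matrix.mul_apply, Finset.smul_sum, Finset.op_sum,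
    Finset.sum_smul, op_mul, mul_smul]
  rw [Finset.sum_comm]

lemma matL_matR [Module R N] [Module Rᵐᵒᵖ N] [SMulCommClass R Rᵐᵒᵖ N]
    (x : Matrix (Fin n) (Fin n) R) (Y : Matrix (Fin n) (Fin n) N) (y : Matrix (Fin n) (Fin n) R) :
    matL R N x (matR R N Y y) = matR R N (matL R N x Y) y := by
  ext i j
  simp only [matL, matR, Matrix.of_apply, Finset.smul_sum]
  rw [Finset.sum_comm]
  exact Finset.sum_congr rfl fun l _ => Finset.sum_congr rfl fun k _ => smul_comm _ _ _

end Bimodule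

section Derivation

variable {R N : Type*} [NormedRing R] [NormedAlgebra ℂ R] [AddCommGroup N] [Module ℂ N]
  [Module R N] [Module Rᵐᵒᵖ N] {e : Matrix (Fin n) (Fin n) R}

namespace IsMatDerivation

variable {D : Matrix (Fin n) (Fin n) R → Matrix (Fin n) (Fin n) N}

lemma corner_apply_idempotent [SMulCommClass R Rᵐᵒᵖ N] (hD : IsMatDerivation R N D)
    (he : IsIdempotentElem e) : matL R N e (matR R N (D e) e) = 0 := by
  have hleib := hD.2 e e
  rw [he.eq] at hleib
  have hdouble : matL R N e (matR R N (D e) e)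
      = matL R N e (matR R N (D e) e) + matL R N e (matR R N (D e) e) := by
    conv_lhs => rw [hleib]
    simp only [matR_add, matL_add, matR_matR, matL_matR, matL_matL, he.eq]
  exact left_eq_add.mp hdouble

lemma corner_apply_mul_of_commute [SMulCommClass R Rᵐᵒᵖ N] (hD : IsMatDerivation R N D)
    (he : IsIdempotentElem e) {x : Matrix (Fin n) (Fin n) R} (hcomm : Commute e x) :
    matL R N e (matR R N (D (e * x)) e) = matL R N e (matR R N (D x) e) := by
  have hDe_term : matL R N e (matR R N (matR R N (D e) x) e) = 0 := by
    rw [matR_matR, ← hcomm.eq, ← matR_matR, matL_matR, hD.corner_apply_idempotent he, matR_zero]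
  rw [hD.2, matR_add, matL_add, hDe_term, zero_add, matL_matR, matL_matL, he.eq, ← matL_matR]

lemma eq_corner_of_apply_eq_zero (hD : IsMatDerivation R N D) (hDe : D e = 0)
    {u : Matrix (Fin n) (Fin n) R} (heu : e * u = u) (hue : u * e = u) :
    D u = matL R N e (matR R N (D u) e) := by
  have hright : D u = matR R N (D u) e := by
    conv_lhs => rw [← hue, hD.2 u e, hDe, matL_zero, add_zero]
  have hleft : D u = matL R N e (D u) := by
    conv_lhs => rw [← heu, hD.2 e u, hDe, matR_zero, zero_add]
  rw [← hright, ← hleft]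

end IsMatDerivation

theorem Is2LocalMatDerivation.corner_apply_of_commute [SMulCommClass R Rᵐᵒᵖ N]
    {Δ : Matrix (Fin n) (Fin n) R → Matrix (Fin n) (Fin n) N} (hΔ : Is2LocalMatDerivation R N Δ)
    (he : IsIdempotentElem e) (hΔe : Δ e = 0) {x : Matrix (Fin n) (Fin n) R}
    (hcomm : Commute e x) :
    matL R N e (matR R N (Δ x) e) = Δ (e * x * e) := by
  have hcorner : e * x * e = e * x := by rw [mul_assoc, ← hcomm.eq, ← mul_assoc, he.eq]
  have hex_left : e * (e * x) = e * x := by rw [← mul_assoc, he.eq]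
  obtain ⟨D, hD, hDx, hDex⟩ := hΔ x (e * x)
  obtain ⟨D', hD', hD'ex, hD'e⟩ := hΔ (e * x) e
  calc matL R N e (matR R N (Δ x) e)
      = matL R N e (matR R N (D (e * x)) e) := by rw [hDx, hD.corner_apply_mul_of_commute he hcomm]
    _ = matL R N e (matR R N (D' (e * x)) e) := by rw [← hDex, hD'ex]
    _ = D' (e * x) := (hD'.eq_corner_of_apply_eq_zero (hD'e ▸ hΔe) hex_left hcorner).symm
    _ = Δ (e * x * e) := by rw [hcorner, hD'ex]

end Derivation

theorem twoLocal_diag_corner (n : ℕ)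
    (Δ : Matrix (Fin n) (Fin n) A → Matrix (Fin n) (Fin n) M)
    (hΔ : Is2LocalMatDerivation A M Δ)
    (hvan : ∀ t ∈ unitSpan A n, Δ t = 0)
    (x : Matrix (Fin n) (Fin n) A) (hx : x ∈ diagSet A n) :
    ∀ k : Fin n,
      matL A M (matUnit A k k) (matR A M (Δ x) (matUnit A k k)) =
        Δ (matUnit A k k * x * matUnit A k k) := by
  intro k
  have he : IsIdempotentElem (matUnit A k k) := by
    simp [IsIdempotentElem, matUnit]
  have hx_diag : x.IsDiag := fun i j hij => hx i j hij
  exact hΔ.corner_apply_of_commute he (hvan _ (Submodule.subset_span ⟨(k, k), rfl⟩))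
    (hx_diag.commute_single_same k)
end

section
/- Let A be a unital complex Banach algebra, M a unital A-bimodule, n ≥ 2, and let Δ be a 2-local derivation from M_n(A) into M_n(M) that vanishes on the linear span of the matrix units {e_{ij}}_{i,j=1}^n. If x ∈ A_{ii} = e_{ii} M_n(A) e_{ii}, then for every j with 1 ≤ j ≤ n one has e_{ji} Δ(x) e_{ij} = Δ(e_{ji} x e_{ij}). -/
/-!
Put `y = e_{ji} x e_{ij}`, `w = x + y` and `u = e_{ij} + e_{ji}`, so that `w = u w u`.
A derivation `D` with `D v = 0` satisfies `D (v z v) = v D(z) v`, and for `p q = q p = 0` it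
satisfies `p D(q z q) p = 0`. Applying 2-locality at the pair `(w, u)` therefore gives
`Δ w = u Δ(w) u`, and at the pairs `(w, x)` and `(w, y)` it identifies the diagonal corners
`e_{ii} Δ(w) e_{ii} = Δ x` and `e_{jj} Δ(w) e_{jj} = Δ y`. Hence
`Δ y = e_{jj} u Δ(w) u e_{jj} = e_{ji} e_{ii} Δ(w) e_{ii} e_{ij} = e_{ji} Δ(x) e_{ij}`.
-/

open MulOpposite Matrix

variable (A M : Type*) [NormedRing A] [NormedAlgebra ℂ A] [CompleteSpace A]
  [AddCommGroup M] [Module ℂ M] [Module A M] [Module Aᵐᵒᵖ M]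
  [SMulCommClass A Aᵐᵒᵖ M] [IsScalarTower ℂ A M] [IsScalarTower ℂ Aᵐᵒᵖ M]

variable {n : ℕ}

variable {A M}

section LeftAction

omit [NormedAlgebra ℂ A] [CompleteSpace A] [Module ℂ M] [Module Aᵐᵒᵖ M] [SMulCommClass A Aᵐᵒᵖ M]
  [IsScalarTower ℂ A M] [IsScalarTower ℂ Aᵐᵒᵖ M]

variable (a b : Matrix (Fin n) (Fin n) A) (Y Z : Matrix (Fin n) (Fin n) M)

lemma matL_mul : matL A M (a * b) Y = matL A M a (matL A M b Y) := by
  ext p q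
  simp only [matL, of_apply, mul_apply, Finset.sum_smul, Finset.smul_sum, mul_smul]
  exact Finset.sum_comm

@[simp] lemma matL_zero_left : matL A M 0 Y = 0 := by
  ext; simp [matL]

@[simp] lemma matL_zero_right : matL A M a (0 : Matrix (Fin n) (Fin n) M) = 0 := by
  ext; simp [matL]

lemma matL_add_s5 : matL A M a (Y + Z) = matL A M a Y + matL A M a Z := by
  ext; simp [matL, smul_add, Finset.sum_add_distrib]

end LeftAction

section RightAction

omit [NormedAlgebra ℂ A] [CompleteSpace A] [Module ℂ M] [Module A M] [SMulCommClass A Aᵐᵒᵖ M]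
  [IsScalarTower ℂ A M] [IsScalarTower ℂ Aᵐᵒᵖ M]

variable (a b : Matrix (Fin n) (Fin n) A) (Y Z : Matrix (Fin n) (Fin n) M)

lemma matR_mul : matR A M Y (a * b) = matR A M (matR A M Y a) b := by
  ext p q
  simp only [matR, of_apply, mul_apply, Finset.op_sum, Finset.sum_smul, Finset.smul_sum, op_mul,
    mul_smul]
  exact Finset.sum_comm

@[simp] lemma matR_zero_left : matR A M (0 : Matrix (Fin n) (Fin n) M) a = 0 := by
  ext; simp [matR]

@[simp] lemma matR_zero_right : matR A M Y 0 = 0 := by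
  ext; simp [matR]

lemma matR_add_s5 : matR A M (Y + Z) a = matR A M Y a + matR A M Z a := by
  ext; simp [matR, smul_add, Finset.sum_add_distrib]

end RightAction

section Bimodule

omit [NormedAlgebra ℂ A] [CompleteSpace A] [Module ℂ M] [IsScalarTower ℂ A M]
  [IsScalarTower ℂ Aᵐᵒᵖ M]

variable (a b c d : Matrix (Fin n) (Fin n) A) (Y : Matrix (Fin n) (Fin n) M)

lemma matL_matR_s5 : matL A M a (matR A M Y b) = matR A M (matL A M a Y) b := by
  ext p q
  simp only [matL, matR, of_apply, Finset.smul_sum]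
  rw [Finset.sum_comm]
  exact Finset.sum_congr rfl fun _ _ => Finset.sum_congr rfl fun _ _ => smul_comm _ _ _

lemma matL_matR_matL_matR :
    matL A M a (matR A M (matL A M b (matR A M Y c)) d) =
      matL A M (a * b) (matR A M Y (c * d)) := by
  rw [matL_matR_s5, ← matL_mul, matL_matR_s5, ← matR_mul, ← matL_matR_s5]

end Bimodule

namespace IsMatDerivation

omit [CompleteSpace A] [IsScalarTower ℂ A M] [IsScalarTower ℂ Aᵐᵒᵖ M]

variable {D : Matrix (Fin n) (Fin n) A → Matrix (Fin n) (Fin n) M} (hD : IsMatDerivation A M D)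
include hD

lemma map_mul_mul (a z b : Matrix (Fin n) (Fin n) A) :
    D (a * z * b) = matR A M (D a) (z * b) + matL A M a (matR A M (D z) b) +
      matL A M (a * z) (D b) := by
  rw [hD.2, hD.2, matR_add_s5, ← matR_mul, matL_matR_s5, matL_mul]

lemma map_mul_mul_of_map_eq_zero {v : Matrix (Fin n) (Fin n) A} (hv : D v = 0)
    (z : Matrix (Fin n) (Fin n) A) : D (v * z * v) = matL A M v (matR A M (D z) v) := by
  simp [hD.map_mul_mul, hv]

lemma matL_matR_map_mul_mul_eq_zero {p q : Matrix (Fin n) (Fin n) A} (hpq : p * q = 0)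
    (hqp : q * p = 0) (z : Matrix (Fin n) (Fin n) A) :
    matL A M p (matR A M (D (q * z * q)) p) = 0 := by
  rw [hD.map_mul_mul, matR_add_s5, matR_add_s5, matL_add_s5, matL_add_s5, ← matR_mul, mul_assoc, hqp,
    matL_matR_matL_matR, hpq, ← matL_matR_s5, ← matL_mul, ← mul_assoc, hpq]
  simp

end IsMatDerivation

section MatrixUnits

omit [NormedAlgebra ℂ A] [CompleteSpace A]

lemma matUnit_mul_matUnit_of_ne {i j k l : Fin n} (h : j ≠ k) :
    matUnit A i j * matUnit A k l = 0 := by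
  simp [matUnit, h]

lemma single_add_single_eq_swap_mul_mul_swap {i j : Fin n} (hij : i ≠ j) (a : A) :
    single i i a + single j j a =
      (matUnit A i j + matUnit A j i) * (single i i a + single j j a) *
        (matUnit A i j + matUnit A j i) := by
  simp [matUnit, add_mul, mul_add, single_mul_single_of_ne, hij, hij.symm, add_comm]

end MatrixUnits

omit [CompleteSpace A] in
lemma matUnit_mem_unitSpan (i j : Fin n) : matUnit A i j ∈ unitSpan A n :=
  Submodule.subset_span ⟨(i, j), rfl⟩

namespace Is2LocalMatDerivation

omit [CompleteSpace A] [IsScalarTower ℂ A M] [IsScalarTower ℂ Aᵐᵒᵖ M]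

variable {Δ : Matrix (Fin n) (Fin n) A → Matrix (Fin n) (Fin n) M}
  (hΔ : Is2LocalMatDerivation A M Δ) (hvan : ∀ t ∈ unitSpan A n, Δ t = 0)
include hΔ hvan

lemma matL_matR_apply_eq_apply {v z : Matrix (Fin n) (Fin n) A} (hv : v ∈ unitSpan A n)
    (hz : z = v * z * v) : matL A M v (matR A M (Δ z) v) = Δ z := by
  obtain ⟨D, hD, hDz, hDv⟩ := hΔ z v
  rw [hvan v hv] at hDv
  have hDz' := hD.map_mul_mul_of_map_eq_zero hDv.symm z
  rw [← hz] at hDz'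
  rw [hDz, ← hDz']

lemma matL_matR_apply_add {p q z₁ z₂ : Matrix (Fin n) (Fin n) A} (hp : p ∈ unitSpan A n)
    (hpq : p * q = 0) (hqp : q * p = 0) (hz₁ : z₁ = p * z₁ * p) (hz₂ : z₂ = q * z₂ * q) :
    matL A M p (matR A M (Δ (z₁ + z₂)) p) = Δ z₁ := by
  obtain ⟨D, hD, hDz, hDz₁⟩ := hΔ (z₁ + z₂) z₁
  rw [hDz, hD.1.map_add, matR_add_s5, matL_add_s5, hz₂, hD.matL_matR_map_mul_mul_eq_zero hpq hqp,
    add_zero, ← hDz₁, hΔ.matL_matR_apply_eq_apply hvan hp hz₁]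

end Is2LocalMatDerivation

theorem twoLocal_conjugate_corner_general (n : ℕ)
    (Δ : Matrix (Fin n) (Fin n) A → Matrix (Fin n) (Fin n) M)
    (hΔ : Is2LocalMatDerivation A M Δ)
    (hvan : ∀ t ∈ unitSpan A n, Δ t = 0)
    (i : Fin n) (x : Matrix (Fin n) (Fin n) A)
    (hx : x = matUnit A i i * x * matUnit A i i) :
    ∀ j : Fin n,
      matL A M (matUnit A j i) (matR A M (Δ x) (matUnit A i j)) =
        Δ (matUnit A j i * x * matUnit A i j) := by
  intro j
  rcases eq_or_ne j i with rfl | hji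
  · rw [← hx]
    exact hΔ.matL_matR_apply_eq_apply hvan (matUnit_mem_unitSpan j j) hx
  obtain ⟨a, rfl⟩ : ∃ a, x = single i i a := ⟨_, hx.trans (single_mul_mul_single ..)⟩
  have hij := hji.symm
  rw [show matUnit A j i * single i i a * matUnit A i j = single j j a by simp [matUnit]]
  have hy : single j j a = matUnit A j j * single j j a * matUnit A j j := by simp [matUnit]
  set u := matUnit A i j + matUnit A j i
  set w := single i i a + single j j a
  have hΔx := hΔ.matL_matR_apply_add hvan (matUnit_mem_unitSpan i i)
    (matUnit_mul_matUnit_of_ne hij) (matUnit_mul_matUnit_of_ne hji) hx hy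
  have hΔy := hΔ.matL_matR_apply_add hvan (matUnit_mem_unitSpan j j)
    (matUnit_mul_matUnit_of_ne hji) (matUnit_mul_matUnit_of_ne hij) hy hx
  rw [add_comm] at hΔy
  have hΔw : matL A M u (matR A M (Δ w) u) = Δ w :=
    hΔ.matL_matR_apply_eq_apply hvan (add_mem (matUnit_mem_unitSpan i j)
      (matUnit_mem_unitSpan j i)) (single_add_single_eq_swap_mul_mul_swap hij a)
  have hleft : matUnit A j i * matUnit A i i = matUnit A j j * u := by
    simp [u, matUnit, mul_add, hji]
  have hright : matUnit A i i * matUnit A i j = u * matUnit A j j := by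
    simp [u, matUnit, add_mul, hij]
  calc matL A M (matUnit A j i) (matR A M (Δ (single i i a)) (matUnit A i j))
      = matL A M (matUnit A j i)
          (matR A M (matL A M (matUnit A i i) (matR A M (Δ w) (matUnit A i i)))
            (matUnit A i j)) := by rw [hΔx]
    _ = matL A M (matUnit A j j) (matR A M (matL A M u (matR A M (Δ w) u)) (matUnit A j j)) := by
        rw [matL_matR_matL_matR, matL_matR_matL_matR, hleft, hright]
    _ = Δ (single j j a) := by rw [hΔw, hΔy]

/-- if a 2-local derivation `Δ : Mₙ(A) → Mₙ(M)` (`n ≥ 2`) vanishes on the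
span of the matrix units and `x ∈ A_{ii} = e_{ii} Mₙ(A) e_{ii}`, then
`e_{ji} · Δ x · e_{ij} = Δ (e_{ji} x e_{ij})` for every `j`. -/
theorem twoLocal_conjugate_corner (n : ℕ) (hn : 2 ≤ n)
    (Δ : Matrix (Fin n) (Fin n) A → Matrix (Fin n) (Fin n) M)
    (hΔ : Is2LocalMatDerivation A M Δ)
    (hvan : ∀ t ∈ unitSpan A n, Δ t = 0)
    (i : Fin n) (x : Matrix (Fin n) (Fin n) A)
    (hx : x = matUnit A i i * x * matUnit A i i) :
    ∀ j : Fin n,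
      matL A M (matUnit A j i) (matR A M (Δ x) (matUnit A i j)) =
        Δ (matUnit A j i * x * matUnit A i j) :=
  twoLocal_conjugate_corner_general n Δ hΔ hvan i x hx
end

section
/- Let A be a unital complex Banach algebra with property (J), M a unital A-bimodule, n ≥ 3, and let Δ be a 2-local derivation from M_n(A) into M_n(M) that vanishes on the linear span of the matrix units {e_{ij}}_{i,j=1}^n. Let Δ_{11} be the restriction of Δ to A_{11} = e_{11} M_n(A) e_{11} (a derivation, identified with a derivation from A into M), and let \bar{Δ_{11}} be its entrywise extension to M_n(A). Then Δ(x) = \bar{Δ_{11}}(x) for every diagonal matrix x ∈ D_n(A), and \bar{Δ_{11}} vanishes on the linear span of the matrix units {e_{ij}}_{i,j=1}^n. -/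
open MulOpposite Matrix

variable (A M : Type*) [NormedRing A] [NormedAlgebra ℂ A] [CompleteSpace A]
  [AddCommGroup M] [Module ℂ M] [Module A M] [Module Aᵐᵒᵖ M]
  [SMulCommClass A Aᵐᵒᵖ M] [IsScalarTower ℂ A M] [IsScalarTower ℂ Aᵐᵒᵖ M]

variable {n : ℕ}

/-- A Jordan derivation from `A` into the `A`-bimodule `N`: a `ℂ`-linear map with
`D (x²) = D x · x + x · D x`. -/
def IsJordanDerivation (D : A → M) : Prop :=
  IsLinearMap ℂ D ∧ ∀ x : A, D (x * x) = op x • D x + x • D x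

universe u v

/-- Property (J): any Jordan derivation from the algebra `A` into any
`A`-bimodule is a derivation. -/
def PropertyJ (A : Type u) [NormedRing A] [NormedAlgebra ℂ A] [CompleteSpace A] : Prop :=
  ∀ (N : Type v) [AddCommGroup N] [Module ℂ N] [Module A N] [Module Aᵐᵒᵖ N]
    [SMulCommClass A Aᵐᵒᵖ N] [IsScalarTower ℂ A N] [IsScalarTower ℂ Aᵐᵒᵖ N]
    (D : A → N), IsJordanDerivation A N D → IsDerivation A N D

variable {n : ℕ} in
/-- The entrywise extension `δ̄` of the restriction `Δ_{zz}` of `Δ` to the corner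
`A_{zz}`, where `Δ_{zz}` is identified with the map `A → M`,
`a ↦ (Δ (a e_{zz}))_{zz}`; so `δ̄(x)_{ij} = (Δ ((x_{ij}) e_{zz}))_{zz}`. -/
def restrictionBar (Δ : Matrix (Fin n) (Fin n) A → Matrix (Fin n) (Fin n) M)
    (z : Fin n) (x : Matrix (Fin n) (Fin n) A) : Matrix (Fin n) (Fin n) M :=
  Matrix.of fun i j => Δ (Matrix.single z z (x i j)) z z


/-!
A derivation `D` of `Mₙ(A)` satisfies `D(e_ii)_ii = 0` (apply it to `e_ii² = e_ii`), so for a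
diagonal `x` the Leibniz rule applied to `e_ii x = x_ii e_ii` gives `D(x_ii e_ii)_ii = D(x)_ii`;
by 2-locality the same holds for `Δ`. If `D e_jj = 0`, then `D x` commutes with `e_jj` whenever
`x` does, which kills the off-diagonal entries of `Δ x`. For `i ≠ z` the transposition
`u = e_iz + e_zi` has `D u = 0` and `u w u = w` for `w = a e_ii + a e_zz`, forcing
`D(w)_ii = D(w)_zz`; hence `Δ(a e_ii)_ii` does not depend on `i`. The second claim holds because
the entries of an element of the span of the matrix units are scalars `c • 1`.
-/

section

variable {R N : Type*} [NormedRing R] [AddCommGroup N] {n : ℕ}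

@[simp]
lemma matL_single_apply [Module R N] (p q : Fin n) (a : R) (Y : Matrix (Fin n) (Fin n) N)
    (i j : Fin n) : matL R N (single p q a) Y i j = if p = i then a • Y q j else 0 := by
  split_ifs with hp
  · subst hp
    simp [matL, single_apply]
  · simp [matL, single_apply, hp]

@[simp]
lemma matR_single_apply [Module Rᵐᵒᵖ N] (p q : Fin n) (a : R) (Y : Matrix (Fin n) (Fin n) N)
    (i j : Fin n) : matR R N Y (single p q a) i j = if q = j then op a • Y i p else 0 := by
  split_ifs with hq
  · subst hq
    simp [matR, single_apply, apply_ite op, ite_smul]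
  · simp [matR, single_apply, hq]

lemma matL_add_left [Module R N] (x x' : Matrix (Fin n) (Fin n) R) (Y : Matrix (Fin n) (Fin n) N) :
    matL R N (x + x') Y = matL R N x Y + matL R N x' Y := by
  ext i j
  simp [matL, add_smul, Finset.sum_add_distrib]

lemma matR_add_right [Module Rᵐᵒᵖ N] (Y : Matrix (Fin n) (Fin n) N)
    (x x' : Matrix (Fin n) (Fin n) R) : matR R N Y (x + x') = matR R N Y x + matR R N Y x' := by
  ext i j
  simp [matR, add_smul, Finset.sum_add_distrib]

lemma matR_apply_of_mem_diagSet [Module Rᵐᵒᵖ N] {x : Matrix (Fin n) (Fin n) R}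
    (hx : x ∈ diagSet R n) (Y : Matrix (Fin n) (Fin n) N) (i j : Fin n) :
    matR R N Y x i j = op (x j j) • Y i j :=
  Finset.sum_eq_single j (fun k _ hk => by rw [hx k j hk, op_zero, zero_smul])
    (fun h => (h (Finset.mem_univ j)).elim)

lemma single_one_mul_of_mem_diagSet {x : Matrix (Fin n) (Fin n) R} (hx : x ∈ diagSet R n)
    (i : Fin n) : single i i 1 * x = single i i (x i i) := by
  ext k l
  rcases eq_or_ne k i with rfl | hk
  · rcases eq_or_ne k l with rfl | hl
    · simp
    · simp [hx k l hl, hl]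
  · simp [hk, Ne.symm hk]

lemma mul_single_one_of_mem_diagSet {x : Matrix (Fin n) (Fin n) R} (hx : x ∈ diagSet R n)
    (i : Fin n) : x * single i i 1 = single i i (x i i) := by
  ext k l
  rcases eq_or_ne l i with rfl | hl
  · rcases eq_or_ne k l with rfl | hk
    · simp
    · simp [hx k l hk, Ne.symm hk]
  · simp [hl, Ne.symm hl]

lemma single_mem_unitSpan_of_mem_unitSpan [NormedAlgebra ℂ R] {t : Matrix (Fin n) (Fin n) R}
    (ht : t ∈ unitSpan R n) (p q i j : Fin n) : single p q (t i j) ∈ unitSpan R n := by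
  have hle : unitSpan R n ≤ (ℂ ∙ (1 : R)).matrix := by
    refine Submodule.span_le.mpr ?_
    rintro _ ⟨⟨k, l⟩, rfl⟩ i j
    by_cases h : k = i ∧ l = j
    · simp [h, Submodule.mem_span_singleton_self]
    · simp [h]
  obtain ⟨c, hc⟩ := Submodule.mem_span_singleton.mp (hle ht i j)
  rw [← hc, ← smul_single]
  exact Submodule.smul_mem _ c (Submodule.subset_span ⟨(p, q), rfl⟩)

variable [NormedAlgebra ℂ R] [Module ℂ N] [Module R N] [Module Rᵐᵒᵖ N]

namespace IsMatDerivation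

variable {D : Matrix (Fin n) (Fin n) R → Matrix (Fin n) (Fin n) N}

lemma map_single_one_apply_self (hD : IsMatDerivation R N D) (i : Fin n) :
    D (single i i 1) i i = 0 := by
  simpa using congr_fun₂ (hD.2 (single i i 1) (single i i 1)) i i

lemma apply_single_one_mul_of_mem_diagSet (hD : IsMatDerivation R N D)
    {x : Matrix (Fin n) (Fin n) R} (hx : x ∈ diagSet R n) (i : Fin n) :
    D (single i i 1 * x) i i = D x i i := by
  simp [hD.2, matR_apply_of_mem_diagSet hx, hD.map_single_one_apply_self]

lemma map_mul_of_map_eq_zero_left (hD : IsMatDerivation R N D) {u : Matrix (Fin n) (Fin n) R}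
    (hu : D u = 0) (x : Matrix (Fin n) (Fin n) R) : D (u * x) = matL R N u (D x) := by
  ext i j
  simp [hD.2, hu, matR]

lemma map_mul_of_map_eq_zero_right (hD : IsMatDerivation R N D) {u : Matrix (Fin n) (Fin n) R}
    (hu : D u = 0) (x : Matrix (Fin n) (Fin n) R) : D (x * u) = matR R N (D x) u := by
  ext i j
  simp [hD.2, hu, matL]

end IsMatDerivation

namespace Is2LocalMatDerivation

variable {Δ : Matrix (Fin n) (Fin n) R → Matrix (Fin n) (Fin n) N}

lemma apply_single_apply_self_of_mem_diagSet (hΔ : Is2LocalMatDerivation R N Δ)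
    {x : Matrix (Fin n) (Fin n) R} (hx : x ∈ diagSet R n) (i : Fin n) :
    Δ (single i i (x i i)) i i = Δ x i i := by
  obtain ⟨D, hD, hDx, hDe⟩ := hΔ x (single i i (x i i))
  rw [hDx, hDe, ← single_one_mul_of_mem_diagSet hx, hD.apply_single_one_mul_of_mem_diagSet hx]

lemma apply_eq_zero_of_mem_diagSet (hΔ : Is2LocalMatDerivation R N Δ) {j : Fin n}
    (hj : Δ (single j j 1) = 0) {x : Matrix (Fin n) (Fin n) R} (hx : x ∈ diagSet R n)
    {i : Fin n} (hij : i ≠ j) : Δ x i j = 0 := by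
  obtain ⟨D, hD, hDx, hDe⟩ := hΔ x (single j j 1)
  have hDe0 : D (single j j 1) = 0 := hDe ▸ hj
  have hcomm := hD.map_mul_of_map_eq_zero_right hDe0 x
  rw [mul_single_one_of_mem_diagSet hx, ← single_one_mul_of_mem_diagSet hx,
    hD.map_mul_of_map_eq_zero_left hDe0] at hcomm
  simpa [hij.symm, ← hDx] using (congr_fun₂ hcomm i j).symm

lemma apply_single_self_eq (hΔ : Is2LocalMatDerivation R N Δ) {i z : Fin n}
    (hu : Δ (single i z 1 + single z i 1) = 0) (a : R) :
    Δ (single i i a) i i = Δ (single z z a) z z := by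
  rcases eq_or_ne i z with rfl | hiz
  · rfl
  set u : Matrix (Fin n) (Fin n) R := single i z 1 + single z i 1
  set w : Matrix (Fin n) (Fin n) R := single i i a + single z z a
  have hw : w ∈ diagSet R n := fun k l hkl => by
    simp only [w, Matrix.add_apply, single_apply]
    grind
  have hwi : w i i = a := by simp [w, hiz.symm]
  have hwz : w z z = a := by simp [w, hiz]
  have huwu : u * (w * u) = w := by
    simp [u, w, add_mul, mul_add, hiz, hiz.symm, add_comm]
  obtain ⟨D, hD, hDw, hDu⟩ := hΔ w u
  have hDu0 : D u = 0 := hDu ▸ hu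
  have hswap : D w i i = D w z z := by
    conv_lhs => rw [← huwu, hD.map_mul_of_map_eq_zero_left hDu0,
      hD.map_mul_of_map_eq_zero_right hDu0]
    simp [u, matL_add_left, matR_add_right, hiz.symm]
  rw [← hwi, hΔ.apply_single_apply_self_of_mem_diagSet hw, hwi, ← hwz,
    hΔ.apply_single_apply_self_of_mem_diagSet hw, hDw, hswap]

end Is2LocalMatDerivation

end

/-- if `A` has property (J) and a 2-local derivation
`Δ : Mₙ(A) → Mₙ(M)` (`n ≥ 3`) vanishes on the span of the matrix units, then `Δ`
agrees on the diagonal matrices with the entrywise extension `δ̄ = \bar{Δ_{11}}` of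
its restriction `Δ_{11}` to the `(1,1)` corner, and `δ̄` vanishes on the span of
the matrix units. -/
theorem twoLocal_eq_restrictionBar_on_diagonal (n : ℕ) (hn : 3 ≤ n)
    (Δ : Matrix (Fin n) (Fin n) A → Matrix (Fin n) (Fin n) M)
    (hΔ : Is2LocalMatDerivation A M Δ)
    (hvan : ∀ t ∈ unitSpan A n, Δ t = 0) :
    (∀ x ∈ diagSet A n, Δ x = restrictionBar A M Δ ⟨0, by omega⟩ x) ∧
    (∀ t ∈ unitSpan A n, restrictionBar A M Δ ⟨0, by omega⟩ t = 0) := by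
  have hunit (p q : Fin n) : single p q 1 ∈ unitSpan A n :=
    Submodule.subset_span ⟨(p, q), rfl⟩
  refine ⟨fun x hx => ?_, fun t ht => ?_⟩
  · ext i j
    rcases eq_or_ne i j with rfl | hij
    · rw [← hΔ.apply_single_apply_self_of_mem_diagSet hx]
      exact hΔ.apply_single_self_eq (hvan _ (add_mem (hunit _ _) (hunit _ _))) _
    · rw [hΔ.apply_eq_zero_of_mem_diagSet (hvan _ (hunit j j)) hx hij]
      simp [restrictionBar, hx i j hij, hvan 0 (zero_mem _)]
  · ext i j
    exact congr_fun₂ (hvan _ (single_mem_unitSpan_of_mem_unitSpan ht _ _ i j)) _ _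
end
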